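/- For every natural number n, the identity ∑_{k=0}^n C(4k,2k) * C(2k,k)^2 * C(k, n-k) * (-64)^(n-k) = ∑_{k=0}^n C(4k,2k) * C(2k,k) * C(4(n-k), 2(n-k)) * C(2(n-k), n-k) holds. -/

import Mathlib

/-!
Both sides satisfy the second-order recurrence
`p₀ n * S n + p₁ n * S (n + 1) + p₂ n * S (n + 2) = 0` and agree for `n = 0, 1`; since
`p₂ n = (n + 2) ^ 3` never vanishes, they agree everywhere. The recurrences are proved by creative
telescoping: the certificates `leftCert` and `rightCert` (rational multiples of the summands, as
produced by Zeilberger's algorithm) turn the recurrence applied to the summands into a telescoping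
difference, up to the terms at the top of the summation range.
-/

open Finset

section Recurrence

variable {R : Type*} [CommRing R]

theorem sum_recurrence_of_telescoping (F : ℕ → ℕ → R) (G : ℕ → R) (p₀ p₁ p₂ : R) (n : ℕ)
    (hG : ∀ k < n, p₀ * F n k + p₁ * F (n + 1) k + p₂ * F (n + 2) k = G (k + 1) - G k)
    (hG₀ : G 0 = 0)
    (hboundary : G n + p₀ * F n n + p₁ * (F (n + 1) n + F (n + 1) (n + 1))
      + p₂ * (F (n + 2) n + F (n + 2) (n + 1) + F (n + 2) (n + 2)) = 0) :
    p₀ * ∑ k ∈ range (n + 1), F n k + p₁ * ∑ k ∈ range (n + 2), F (n + 1) k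
      + p₂ * ∑ k ∈ range (n + 3), F (n + 2) k = 0 := by
  have htelescope :
      ∑ k ∈ range n, (p₀ * F n k + p₁ * F (n + 1) k + p₂ * F (n + 2) k) = G n := by
    rw [sum_congr rfl fun k hk => hG k (mem_range.mp hk), sum_range_sub, hG₀, sub_zero]
  simp only [sum_range_succ, mul_add, sum_add_distrib, mul_sum] at htelescope ⊢
  linear_combination htelescope + hboundary

theorem eq_of_second_order_recurrence [IsDomain R] {u v : ℕ → R} (p₀ p₁ p₂ : ℕ → R)
    (hp₂ : ∀ n, p₂ n ≠ 0)
    (hu : ∀ n, p₀ n * u n + p₁ n * u (n + 1) + p₂ n * u (n + 2) = 0)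
    (hv : ∀ n, p₀ n * v n + p₁ n * v (n + 1) + p₂ n * v (n + 2) = 0)
    (h₀ : u 0 = v 0) (h₁ : u 1 = v 1) (n : ℕ) : u n = v n := by
  induction n using Nat.twoStepInduction with
  | zero => exact h₀
  | one => exact h₁
  | more n ih₀ ih₁ =>
    refine mul_left_cancel₀ (hp₂ n) ?_
    linear_combination hu n - hv n - p₀ n * ih₀ - p₁ n * ih₁

end Recurrence

section Binomial

variable {K : Type*} [Field K] [CharZero K]

theorem Nat.cast_choose_succ_right (n k : ℕ) :
    (n.choose (k + 1) : K) = n.choose k * (n - k) / (k + 1) := by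
  rw [eq_div_iff (Nat.cast_add_one_ne_zero k)]
  rcases le_or_gt k n with hk | hk
  · have h := congrArg (Nat.cast (R := K)) (Nat.choose_succ_right_eq n k)
    push_cast [hk] at h
    exact h
  · simp [Nat.choose_eq_zero_of_lt hk, Nat.choose_eq_zero_of_lt (hk.trans (Nat.lt_succ_self k))]

theorem Nat.cast_choose_eq_succ_left (n k : ℕ) :
    (n.choose k : K) = (n + 1).choose k * (n + 1 - k) / (n + 1) := by
  rw [eq_div_iff (Nat.cast_add_one_ne_zero n)]
  rcases le_or_gt k (n + 1) with hk | hk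
  · have h := congrArg (Nat.cast (R := K)) (Nat.choose_mul_succ_eq n k)
    push_cast [hk] at h
    exact h
  · simp [Nat.choose_eq_zero_of_lt hk, Nat.choose_eq_zero_of_lt (Nat.lt_of_succ_lt hk)]

theorem Nat.cast_centralBinom_succ (n : ℕ) :
    (Nat.centralBinom (n + 1) : K) = 2 * (2 * n + 1) * Nat.centralBinom n / (n + 1) := by
  rw [eq_div_iff (Nat.cast_add_one_ne_zero n)]
  exact_mod_cast (mul_comm _ _).trans (Nat.succ_mul_centralBinom_succ n)

end Binomial

namespace CentralBinomConvolution

def b (k : ℕ) : ℚ := Nat.centralBinom (2 * k) * Nat.centralBinom k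

def a (k : ℕ) : ℚ := b k * Nat.centralBinom k

lemma b_eq_choose (k : ℕ) : b k = (4 * k).choose (2 * k) * (2 * k).choose k := by
  rw [b, Nat.centralBinom_eq_two_mul_choose, Nat.centralBinom_eq_two_mul_choose, ← mul_assoc]
  norm_num

lemma cast_centralBinom_two_mul_succ (m : ℕ) :
    (Nat.centralBinom (2 * (m + 1)) : ℚ)
      = 4 * (4 * m + 1) * (4 * m + 3) / ((2 * m + 1) * (2 * m + 2)) * Nat.centralBinom (2 * m) := by
  rw [show 2 * (m + 1) = 2 * m + 1 + 1 by ring, Nat.cast_centralBinom_succ,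
    Nat.cast_centralBinom_succ]
  push_cast
  field_simp
  ring

lemma b_zero : b 0 = 1 := by simp [b]

lemma b_succ (m : ℕ) : b (m + 1) = 4 * (4 * m + 1) * (4 * m + 3) / (m + 1) ^ 2 * b m := by
  rw [b, b, cast_centralBinom_two_mul_succ, Nat.cast_centralBinom_succ]
  field_simp

lemma a_succ (m : ℕ) :
    a (m + 1) = 8 * (4 * m + 1) * (2 * m + 1) * (4 * m + 3) / (m + 1) ^ 3 * a m := by
  rw [a, a, b_succ, Nat.cast_centralBinom_succ]
  field_simp
  ring

def p₀ (n : ℕ) : ℚ := 1024 * (n + 1) * (2 * n + 1) * (2 * n + 3)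

def p₁ (n : ℕ) : ℚ := -8 * (2 * n + 3) * (8 * n ^ 2 + 24 * n + 19)

def p₂ (n : ℕ) : ℚ := (n + 2) ^ 3

def leftTerm (n k : ℕ) : ℚ := a k * k.choose (n - k) * (-64) ^ (n - k)

def leftCert (n k : ℕ) : ℚ :=
  -4096 * (n + 2) * k ^ 2 * (2 * k - n) * (2 * k - n - 1) / ((n - k : ℕ) + 1) / ((n - k : ℕ) + 2)
    * leftTerm n k

/- The binomial ratio lemmas hold for all arguments, so after expressing every binomial through
`(k + 1).choose j` this is an identity of rational functions, with no case split on `k` against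
`j`. -/
lemma leftCert_telescopes (n k : ℕ) (hk : k < n) :
    p₀ n * leftTerm n k + p₁ n * leftTerm (n + 1) k + p₂ n * leftTerm (n + 2) k
      = leftCert n (k + 1) - leftCert n k := by
  obtain ⟨j, rfl⟩ : ∃ j, n = k + j + 1 := ⟨n - k - 1, by omega⟩
  simp only [leftCert, leftTerm, p₀, p₁, p₂]
  rw [show k + j + 1 - k = j + 1 by omega, show k + j + 1 + 1 - k = j + 1 + 1 by omega,
    show k + j + 1 + 2 - k = j + 1 + 1 + 1 by omega, show k + j + 1 - (k + 1) = j by omega,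
    Nat.cast_choose_succ_right k (j + 1 + 1), Nat.cast_choose_succ_right k (j + 1),
    Nat.cast_choose_succ_right k j, Nat.cast_choose_eq_succ_left k j, a_succ]
  push_cast
  field_simp
  ring

lemma leftCert_boundary (n : ℕ) :
    leftCert n n + p₀ n * leftTerm n n + p₁ n * (leftTerm (n + 1) n + leftTerm (n + 1) (n + 1))
      + p₂ n * (leftTerm (n + 2) n + leftTerm (n + 2) (n + 1) + leftTerm (n + 2) (n + 2)) = 0 := by
  simp [leftCert, leftTerm, p₀, p₁, p₂, Nat.cast_choose_two, a_succ]
  field_simp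
  ring

def rightCertPoly (n k : ℚ) : ℚ :=
  (2208 + 14416 * n + 26624 * n ^ 2 + 18176 * n ^ 3 + 4096 * n ^ 4)
    + (-13024 - 45056 * n - 43008 * n ^ 2 - 12288 * n ^ 3) * k
    + (18432 + 31488 * n + 12288 * n ^ 2) * k ^ 2 + (-6656 - 4096 * n) * k ^ 3

def rightTerm (n k : ℕ) : ℚ := b k * b (n - k)

def rightCert (n k : ℕ) : ℚ :=
  k ^ 2 * rightCertPoly n k / ((n - k : ℕ) + 1) ^ 2 / ((n - k : ℕ) + 2) ^ 2 * rightTerm n k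

lemma rightCert_telescopes (n k : ℕ) (hk : k < n) :
    p₀ n * rightTerm n k + p₁ n * rightTerm (n + 1) k + p₂ n * rightTerm (n + 2) k
      = rightCert n (k + 1) - rightCert n k := by
  obtain ⟨j, rfl⟩ : ∃ j, n = k + j + 1 := ⟨n - k - 1, by omega⟩
  simp only [rightCert, rightTerm, rightCertPoly, p₀, p₁, p₂]
  rw [show k + j + 1 - k = j + 1 by omega, show k + j + 1 + 1 - k = j + 1 + 1 by omega,
    show k + j + 1 + 2 - k = j + 1 + 1 + 1 by omega, show k + j + 1 - (k + 1) = j by omega,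
    b_succ (j + 1 + 1), b_succ (j + 1), b_succ j, b_succ k]
  push_cast
  field_simp
  ring

lemma rightCert_boundary (n : ℕ) :
    rightCert n n + p₀ n * rightTerm n n + p₁ n * (rightTerm (n + 1) n + rightTerm (n + 1) (n + 1))
      + p₂ n * (rightTerm (n + 2) n + rightTerm (n + 2) (n + 1) + rightTerm (n + 2) (n + 2))
      = 0 := by
  simp [rightCert, rightTerm, rightCertPoly, p₀, p₁, p₂, b_succ, b_zero]
  field_simp
  ring

def leftSum (n : ℕ) : ℚ := ∑ k ∈ range (n + 1), leftTerm n k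

def rightSum (n : ℕ) : ℚ := ∑ k ∈ range (n + 1), rightTerm n k

lemma leftSum_recurrence (n : ℕ) :
    p₀ n * leftSum n + p₁ n * leftSum (n + 1) + p₂ n * leftSum (n + 2) = 0 :=
  sum_recurrence_of_telescoping leftTerm (leftCert n) _ _ _ n (leftCert_telescopes n)
    (by simp [leftCert]) (leftCert_boundary n)

lemma rightSum_recurrence (n : ℕ) :
    p₀ n * rightSum n + p₁ n * rightSum (n + 1) + p₂ n * rightSum (n + 2) = 0 :=
  sum_recurrence_of_telescoping rightTerm (rightCert n) _ _ _ n (rightCert_telescopes n)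
    (by simp [rightCert]) (rightCert_boundary n)

lemma leftSum_eq_rightSum (n : ℕ) : leftSum n = rightSum n :=
  eq_of_second_order_recurrence p₀ p₁ p₂ (fun n => by unfold p₂; positivity) leftSum_recurrence
    rightSum_recurrence (by simp [leftSum, rightSum, leftTerm, rightTerm, a, b_zero])
    (by simp [leftSum, rightSum, leftTerm, rightTerm, a, sum_range_succ, b_zero, b_succ,
      Nat.centralBinom]; norm_num) n

end CentralBinomConvolution

open CentralBinomConvolution in
theorem stmt_2 (n : ℕ) :
    ∑ k ∈ Finset.range (n + 1),
      ((Nat.choose (4 * k) (2 * k) : ℤ) * (Nat.choose (2 * k) k) ^ 2 *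
        (Nat.choose k (n - k)) * (-64) ^ (n - k))
    = ∑ k ∈ Finset.range (n + 1),
      ((Nat.choose (4 * k) (2 * k) : ℤ) * (Nat.choose (2 * k) k) *
        (Nat.choose (4 * (n - k)) (2 * (n - k))) * (Nat.choose (2 * (n - k)) (n - k))) := by
  have h := leftSum_eq_rightSum n
  simp only [leftSum, rightSum, leftTerm, rightTerm, a, b_eq_choose,
    Nat.centralBinom_eq_two_mul_choose] at h
  rw [← Int.cast_inj (α := ℚ)]
  push_cast
  convert h using 2 with k <;> ring
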